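/- Let n ≥ 1 and let d̄₁,…,d̄ₙ and d₁,…,dₙ be real numbers in [u, 1] for some u > 0 (so all are bounded below by u and above by 1). Then the second-order remainder of the product linearization satisfies |∏ᵢ d̄ᵢ − ∏ᵢ dᵢ − ∑ₗ (∏_{i≠l} d̄ᵢ)(d̄ₗ − dₗ)| ≤ (2ⁿ / u^(n−1)) · ∑ᵢ |d̄ᵢ − dᵢ|². -/

import Mathlib

/-!
Write `R(a, b)` for `∏ a - ∏ b - ∑ₗ (∏_{i ≠ l} aᵢ)(aₗ - bₗ)`. Adding one index `j` to the
product gives `R' = aⱼ R + (bⱼ - aⱼ)(∏ a - ∏ b)`, so for entries of norm at most `1`, induction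
together with the first-order bound `‖∏ a - ∏ b‖ ≤ ∑ ‖aᵢ - bᵢ‖` yields `‖R‖ ≤ (∑ ‖aᵢ - bᵢ‖)²`.
By Cauchy–Schwarz this is at most `n ∑ ‖aᵢ - bᵢ‖²`, and `n ≤ 2ⁿ / u^(n-1)` when `0 < u ≤ 1`.
-/

open Finset

theorem sum_prod_erase_insert_mul {ι R : Type*} [CommSemiring R] [DecidableEq ι] {s : Finset ι}
    {j : ι} (hj : j ∉ s) (a c : ι → R) :
    ∑ l ∈ insert j s, (∏ i ∈ (insert j s).erase l, a i) * c l =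
      (∏ i ∈ s, a i) * c j + a j * ∑ l ∈ s, (∏ i ∈ s.erase l, a i) * c l := by
  rw [sum_insert hj, erase_insert hj, mul_sum]
  congr 1
  refine sum_congr rfl fun l hl => ?_
  have hlj : l ≠ j := ne_of_mem_of_not_mem hl hj
  rw [erase_insert_of_ne hlj.symm, prod_insert (fun h => hj (mem_of_mem_erase h)), mul_assoc]

section NormedCommRing

variable {ι R : Type*} [NormedCommRing R] [NormOneClass R] {s : Finset ι} {a b : ι → R}

theorem norm_prod_le_one_of_forall_norm_le_one (ha : ∀ i ∈ s, ‖a i‖ ≤ 1) :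
    ‖∏ i ∈ s, a i‖ ≤ 1 :=
  (norm_prod_le s a).trans (prod_le_one (fun _ _ => norm_nonneg _) ha)

theorem norm_prod_sub_prod_le_sum (ha : ∀ i ∈ s, ‖a i‖ ≤ 1) (hb : ∀ i ∈ s, ‖b i‖ ≤ 1) :
    ‖∏ i ∈ s, a i - ∏ i ∈ s, b i‖ ≤ ∑ i ∈ s, ‖a i - b i‖ := by
  classical
  induction s using Finset.induction_on with
  | empty => simp
  | insert j s hj ih =>
    rw [forall_mem_insert] at ha hb
    rw [prod_insert hj, prod_insert hj, sum_insert hj]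
    calc ‖a j * ∏ i ∈ s, a i - b j * ∏ i ∈ s, b i‖
        = ‖(a j - b j) * ∏ i ∈ s, a i + b j * (∏ i ∈ s, a i - ∏ i ∈ s, b i)‖ := by
          congr 1; ring
      _ ≤ ‖a j - b j‖ * ‖∏ i ∈ s, a i‖ + ‖b j‖ * ‖∏ i ∈ s, a i - ∏ i ∈ s, b i‖ :=
        (norm_add_le _ _).trans (add_le_add (norm_mul_le _ _) (norm_mul_le _ _))
      _ ≤ ‖a j - b j‖ * 1 + 1 * ∑ i ∈ s, ‖a i - b i‖ := by
        gcongr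
        exacts [norm_prod_le_one_of_forall_norm_le_one ha.2, hb.1, ih ha.2 hb.2]
      _ = ‖a j - b j‖ + ∑ i ∈ s, ‖a i - b i‖ := by ring

variable [DecidableEq ι]

theorem norm_prod_sub_prod_sub_sum_le_sq (ha : ∀ i ∈ s, ‖a i‖ ≤ 1) (hb : ∀ i ∈ s, ‖b i‖ ≤ 1) :
    ‖∏ i ∈ s, a i - ∏ i ∈ s, b i - ∑ l ∈ s, (∏ i ∈ s.erase l, a i) * (a l - b l)‖ ≤
      (∑ i ∈ s, ‖a i - b i‖) ^ 2 := by
  induction s using Finset.induction_on with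
  | empty => simp
  | insert j s hj ih =>
    rw [forall_mem_insert] at ha hb
    set P := ∏ i ∈ s, a i - ∏ i ∈ s, b i
    set S := ∑ i ∈ s, ‖a i - b i‖
    have hP : ‖P‖ ≤ S := norm_prod_sub_prod_le_sum ha.2 hb.2
    have hS : 0 ≤ S := sum_nonneg fun _ _ => norm_nonneg _
    rw [prod_insert hj, prod_insert hj, sum_prod_erase_insert_mul hj a, sum_insert hj]
    calc _ = ‖a j * (P - ∑ l ∈ s, (∏ i ∈ s.erase l, a i) * (a l - b l)) + (b j - a j) * P‖ := by
          congr 1; ring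
      _ ≤ ‖a j‖ * ‖P - ∑ l ∈ s, (∏ i ∈ s.erase l, a i) * (a l - b l)‖ + ‖b j - a j‖ * ‖P‖ :=
        (norm_add_le _ _).trans (add_le_add (norm_mul_le _ _) (norm_mul_le _ _))
      _ ≤ 1 * S ^ 2 + ‖a j - b j‖ * S := by
        rw [norm_sub_rev (b j)]
        gcongr
        exacts [ha.1, ih ha.2 hb.2]
      _ ≤ (‖a j - b j‖ + S) ^ 2 := by nlinarith [norm_nonneg (a j - b j)]

end NormedCommRing

theorem natCast_le_two_pow_div_pow_sub_one {u : ℝ} (hu : 0 < u) (hu1 : u ≤ 1) (n : ℕ) :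
    (n : ℝ) ≤ 2 ^ n / u ^ (n - 1) :=
  calc (n : ℝ) ≤ 2 ^ n := by exact_mod_cast Nat.lt_two_pow_self.le
    _ ≤ 2 ^ n / u ^ (n - 1) := le_div_self (by positivity) (by positivity) (pow_le_one₀ hu.le hu1)

theorem product_second_order_bound_general (n : ℕ) (u : ℝ) (hu : 0 < u)
    (dbar d : Fin n → ℝ)
    (hdbar : ∀ i, dbar i ∈ Set.Icc u 1) (hd : ∀ i, d i ∈ Set.Icc u 1) :
    |∏ i, dbar i - ∏ i, d i -
        ∑ l, (∏ i ∈ Finset.univ.erase l, dbar i) * (dbar l - d l)| ≤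
      (2 ^ n / u ^ (n - 1)) * ∑ i, |dbar i - d i| ^ 2 := by
  rcases n.eq_zero_or_pos with rfl | hn
  · simp
  have hu1 : u ≤ 1 := (hdbar ⟨0, hn⟩).1.trans (hdbar _).2
  have norm_le_one (f : Fin n → ℝ) (hf : ∀ i, f i ∈ Set.Icc u 1) : ∀ i ∈ univ, ‖f i‖ ≤ 1 :=
    fun i _ => abs_le.2 ⟨by linarith [(hf i).1], (hf i).2⟩
  calc _ ≤ (∑ i, |dbar i - d i|) ^ 2 :=
        norm_prod_sub_prod_sub_sum_le_sq (norm_le_one _ hdbar) (norm_le_one _ hd)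
    _ ≤ n * ∑ i, |dbar i - d i| ^ 2 := by
      simpa using sq_sum_le_card_mul_sum_sq (s := univ) (f := fun i => |dbar i - d i|)
    _ ≤ _ := by gcongr; exact natCast_le_two_pow_div_pow_sub_one hu hu1 n

theorem product_second_order_bound (n : ℕ) (hn : 1 ≤ n) (u : ℝ) (hu : 0 < u)
    (dbar d : Fin n → ℝ)
    (hdbar : ∀ i, dbar i ∈ Set.Icc u 1) (hd : ∀ i, d i ∈ Set.Icc u 1) :
    |∏ i, dbar i - ∏ i, d i -
        ∑ l, (∏ i ∈ Finset.univ.erase l, dbar i) * (dbar l - d l)| ≤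
      (2 ^ n / u ^ (n - 1)) * ∑ i, |dbar i - d i| ^ 2 :=
  product_second_order_bound_general n u hu dbar d hdbar hd
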